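/- Let p ∈ ℂ, r > 0, and let g be a continuous complex-valued function on the circle {w : |w − p| = r}. For z with |z − p| > r define h(z) = −(1/(2πI)) ∮_{C(p,r)} g(w)/(w − z) dw. Then h is holomorphic on {z : |z − p| > r}, h(z) → 0 as |z| → ∞, and for every z with |z − p| > r one has h(z) = Σ_{k=1}^∞ a_k (z − p)^{−k}, where a_k = (1/(2πI)) ∮_{C(p,r)} g(w)(w − p)^{k−1} dw; the series converges uniformly on compact subsets of {z : |z − p| > r}. -/

import Mathlib

/-!
For `|z - p| > r` the Cauchy kernel expands geometrically,
`(z - w)⁻¹ = ∑ₖ (w - p)ᵏ / (z - p)ᵏ⁺¹`, uniformly for `w` on the circle, and integrating term by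
term gives the Laurent series. If `|g| ≤ M` on the circle, its `k`-th term is at most
`r M / R * (r / R)ᵏ` on `{|z - p| ≥ R}`, so for each `R > r` the M-test gives uniform convergence
there, hence on compact subsets of `{|z - p| > r}`, and holomorphy follows from locally uniform
convergence. The decay at infinity is the estimate `|h z| ≤ r M / (|z - p| - r)`.
-/

noncomputable section

open Complex

/-- Minus the Cauchy transform of `g` over the circle `C(p,r)`. -/
def cauchyOut (p : ℂ) (r : ℝ) (g : ℂ → ℂ) (z : ℂ) : ℂ :=
  -((1 / (2 * Real.pi * Complex.I)) * ∮ w in C(p, r), g w / (w - z))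

/-- The coefficient `a_{k+1} = (1/(2πI)) ∮_{C(p,r)} g(w)(w − p)^k dw`. -/
def laurentCoeff (p : ℂ) (r : ℝ) (g : ℂ → ℂ) (k : ℕ) : ℂ :=
  (1 / (2 * Real.pi * Complex.I)) * ∮ w in C(p, r), g w * (w - p) ^ k

open Metric Filter Finset

theorem TendstoUniformlyOn.of_hasSum_of_norm_le {β F : Type*} [NormedAddCommGroup F]
    [CompleteSpace F] {f : ℕ → β → F} {g : β → F} {u : ℕ → ℝ} {s : Set β} (hu : Summable u)
    (hfu : ∀ n, ∀ x ∈ s, ‖f n x‖ ≤ u n) (hfg : ∀ x ∈ s, HasSum (fun n => f n x) (g x)) :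
    TendstoUniformlyOn (fun N x => ∑ n ∈ range N, f n x) g atTop s :=
  (tendstoUniformlyOn_tsum_nat hu hfu).congr_right fun x hx => (hfg x hx).tsum_eq

theorem hasSum_circleIntegral_of_norm_le {E : Type*} [NormedAddCommGroup E] [NormedSpace ℂ E]
    [CompleteSpace E] {F : ℕ → ℂ → E} {f : ℂ → E} {c : ℂ} {R : ℝ} {u : ℕ → ℝ} (hR : 0 ≤ R)
    (hF : ∀ n, ContinuousOn (F n) (sphere c R)) (hu : Summable u)
    (hFu : ∀ n, ∀ w ∈ sphere c R, ‖F n w‖ ≤ u n)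
    (hFf : ∀ w ∈ sphere c R, HasSum (fun n => F n w) (f w)) :
    HasSum (fun n => ∮ w in C(c, R), F n w) (∮ w in C(c, R), f w) := by
  have hsum : Summable fun n => ∮ w in C(c, R), F n w :=
    (hu.mul_left (2 * Real.pi * R)).of_norm_bounded fun n =>
      circleIntegral.norm_integral_le_of_norm_le_const hR (hFu n)
  rw [hsum.hasSum_iff_tendsto_nat]
  have hlim := TendstoUniformlyOn.tendsto_circleIntegral_of_continuousOn hR
    (.of_forall fun N => continuousOn_finsetSum _ fun n _ => hF n)
    (TendstoUniformlyOn.of_hasSum_of_norm_le hu hFu hFf)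
  simpa only [circleIntegral.integral_fun_sum fun n _ => (hF n).circleIntegrable hR] using hlim

theorem hasSum_pow_mul_inv_pow_succ {𝕜 : Type*} [NormedField 𝕜] [CompleteSpace 𝕜] {a b : 𝕜}
    (hab : ‖a‖ < ‖b‖) : HasSum (fun n => a ^ n * (b ^ (n + 1))⁻¹) (b - a)⁻¹ := by
  have hb : b ≠ 0 := norm_pos_iff.1 ((norm_nonneg a).trans_lt hab)
  have hq : ‖a / b‖ < 1 := by rwa [norm_div, div_lt_one (norm_pos_iff.2 hb)]
  have hterm : ∀ n : ℕ, a ^ n * (b ^ (n + 1))⁻¹ = (a / b) ^ n * b⁻¹ := fun n => by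
    rw [div_pow, pow_succ]
    field_simp
  have hsum : (b - a)⁻¹ = (1 - a / b)⁻¹ * b⁻¹ := by
    rw [← mul_inv, sub_mul, one_mul, div_mul_cancel₀ a hb]
  simpa only [hterm, hsum] using (hasSum_geometric_of_norm_lt_one hq).mul_right b⁻¹

theorem norm_mul_inv_pow_succ_le {𝕜 : Type*} [NormedField 𝕜] {c y : 𝕜} {C ρ R : ℝ} {k : ℕ}
    (hR : 0 < R) (hy : R ≤ ‖y‖) (hc : ‖c‖ ≤ C * ρ ^ k) :
    ‖c * (y ^ (k + 1))⁻¹‖ ≤ C / R * (ρ / R) ^ k := by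
  rw [norm_mul, norm_inv, norm_pow]
  calc ‖c‖ * (‖y‖ ^ (k + 1))⁻¹ ≤ C * ρ ^ k * (R ^ (k + 1))⁻¹ := by
        gcongr
        exact (norm_nonneg c).trans hc
    _ = C / R * (ρ / R) ^ k := by
        rw [div_pow, pow_succ]
        field_simp

section Laurent

variable {p : ℂ} {r : ℝ} {g : ℂ → ℂ}

theorem norm_laurentCoeff_le (hr : 0 ≤ r) {M : ℝ} (hM : ∀ w ∈ sphere p r, ‖g w‖ ≤ M) (k : ℕ) :
    ‖laurentCoeff p r g k‖ ≤ r * M * r ^ k := by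
  rw [mul_assoc, laurentCoeff, one_div, ← smul_eq_mul]
  refine circleIntegral.norm_two_pi_i_inv_smul_integral_le_of_norm_le_const hr fun w hw => ?_
  rw [norm_mul, norm_pow, mem_sphere_iff_norm.1 hw]
  exact mul_le_mul_of_nonneg_right (hM w hw) (by positivity)

theorem hasSum_laurentSeries (hr : 0 ≤ r) (hg : ContinuousOn g (sphere p r)) {z : ℂ}
    (hz : r < dist z p) :
    HasSum (fun k => laurentCoeff p r g k * ((z - p) ^ (k + 1))⁻¹) (cauchyOut p r g z) := by
  obtain ⟨M, hM⟩ := (isCompact_sphere p r).exists_bound_of_continuousOn hg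
  set x : ℕ → ℂ := fun k => ((z - p) ^ (k + 1))⁻¹
  have hR : 0 < dist z p := hr.trans_lt hz
  have hkernel : ∀ w ∈ sphere p r, HasSum (fun k => g w * (w - p) ^ k * x k) (g w * (z - w)⁻¹) :=
    fun w hw => by
      have hwz : ‖w - p‖ < ‖z - p‖ := by rwa [mem_sphere_iff_norm.1 hw, ← dist_eq_norm]
      simpa only [mul_assoc, sub_sub_sub_cancel_right] using
        (hasSum_pow_mul_inv_pow_succ hwz).mul_left (g w)
  have hbound : ∀ k, ∀ w ∈ sphere p r,
      ‖g w * (w - p) ^ k * x k‖ ≤ M / dist z p * (r / dist z p) ^ k :=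
    fun k w hw => norm_mul_inv_pow_succ_le hR (dist_eq_norm z p).le <| by
      rw [norm_mul, norm_pow, mem_sphere_iff_norm.1 hw]
      exact mul_le_mul_of_nonneg_right (hM w hw) (by positivity)
  have hcont : ∀ k, ContinuousOn (fun w => g w * (w - p) ^ k * x k) (sphere p r) := fun k =>
    (hg.mul (by fun_prop)).mul continuousOn_const
  have hcoeff : ∀ k, laurentCoeff p r g k * x k
      = 1 / (2 * Real.pi * I) * ∮ w in C(p, r), g w * (w - p) ^ k * x k := fun k => by
    rw [laurentCoeff, mul_assoc]
    exact congrArg _ (circleIntegral.integral_smul_const _ _ _ _).symm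
  have hvalue : cauchyOut p r g z = 1 / (2 * Real.pi * I) * ∮ w in C(p, r), g w * (z - w)⁻¹ := by
    have hneg : ∀ w, g w * (z - w)⁻¹ = -1 * (g w / (w - z)) := fun w => by
      rw [← neg_sub, inv_neg]
      ring
    simp only [hneg, circleIntegral.integral_const_mul, cauchyOut]
    ring
  simp only [x, hcoeff, hvalue]
  exact (hasSum_circleIntegral_of_norm_le hr hcont
    ((summable_geometric_of_lt_one (by positivity) ((div_lt_one hR).2 hz)).mul_left _) hbound
    hkernel).mul_left _

theorem tendstoUniformlyOn_laurentSeries (hr : 0 ≤ r) (hg : ContinuousOn g (sphere p r)) {R : ℝ}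
    (hR : r < R) :
    TendstoUniformlyOn
      (fun N z => ∑ k ∈ range N, laurentCoeff p r g k * ((z - p) ^ (k + 1))⁻¹)
      (cauchyOut p r g) atTop {z | R ≤ dist z p} := by
  obtain ⟨M, hM⟩ := (isCompact_sphere p r).exists_bound_of_continuousOn hg
  have hR0 : 0 < R := hr.trans_lt hR
  refine TendstoUniformlyOn.of_hasSum_of_norm_le
    ((summable_geometric_of_lt_one (by positivity) ((div_lt_one hR0).2 hR)).mul_left (r * M / R))
    (fun k z hz => norm_mul_inv_pow_succ_le hR0 (le_of_le_of_eq hz (dist_eq_norm z p))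
      (norm_laurentCoeff_le hr hM k))
    fun z hz => hasSum_laurentSeries hr hg (hR.trans_le hz)

theorem tendstoUniformlyOn_laurentSeries_of_isCompact (hr : 0 ≤ r)
    (hg : ContinuousOn g (sphere p r)) {K : Set ℂ} (hK : IsCompact K)
    (hKp : K ⊆ {z | r < dist z p}) :
    TendstoUniformlyOn
      (fun N z => ∑ k ∈ range N, laurentCoeff p r g k * ((z - p) ^ (k + 1))⁻¹)
      (cauchyOut p r g) atTop K := by
  obtain ⟨R, hR, hKR⟩ := hK.exists_forall_le' (continuous_id.dist continuous_const).continuousOn hKp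
  exact (tendstoUniformlyOn_laurentSeries hr hg hR).mono hKR

theorem differentiableOn_cauchyOut (hr : 0 ≤ r) (hg : ContinuousOn g (sphere p r)) :
    DifferentiableOn ℂ (cauchyOut p r g) {z | r < dist z p} := by
  have hopen : IsOpen {z : ℂ | r < dist z p} :=
    isOpen_lt continuous_const (continuous_id.dist continuous_const)
  have hlocal := (tendstoLocallyUniformlyOn_iff_forall_isCompact hopen).2 fun K hKp hK =>
    tendstoUniformlyOn_laurentSeries_of_isCompact hr hg hK hKp
  refine hlocal.differentiableOn (.of_forall fun N => ?_) hopen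
  refine DifferentiableOn.fun_sum fun k _ => DifferentiableOn.const_mul ?_ _
  refine ((differentiable_id.sub_const p).pow _).differentiableOn.inv fun z hz => ?_
  exact pow_ne_zero _ (sub_ne_zero.2 (dist_pos.1 (hr.trans_lt hz)))

theorem norm_cauchyOut_le (hr : 0 ≤ r) {M : ℝ} (hM : ∀ w ∈ sphere p r, ‖g w‖ ≤ M) {z : ℂ}
    (hz : r < dist z p) : ‖cauchyOut p r g z‖ ≤ r * M / (dist z p - r) := by
  rw [cauchyOut, norm_neg, one_div, ← smul_eq_mul, mul_div_assoc]
  refine circleIntegral.norm_two_pi_i_inv_smul_integral_le_of_norm_le_const hr fun w hw => ?_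
  have hwz : dist z p - r ≤ ‖w - z‖ := by
    rw [← dist_eq_norm]
    linarith [dist_triangle z w p, dist_comm w z, mem_sphere.1 hw]
  rw [norm_div]
  exact div_le_div₀ ((norm_nonneg _).trans (hM w hw)) (hM w hw) (sub_pos.2 hz) hwz

theorem tendsto_cauchyOut_cobounded (hr : 0 ≤ r) (hg : ContinuousOn g (sphere p r)) :
    Tendsto (cauchyOut p r g) (Bornology.cobounded ℂ) (nhds 0) := by
  obtain ⟨M, hM⟩ := (isCompact_sphere p r).exists_bound_of_continuousOn hg
  have hdist := tendsto_dist_right_cobounded_atTop p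
  have hbound : ∀ᶠ z in Bornology.cobounded ℂ, ‖cauchyOut p r g z‖ ≤ r * M / (dist z p - r) :=
    (hdist.eventually_gt_atTop r).mono fun z hz => norm_cauchyOut_le hr hM hz
  refine squeeze_zero_norm' hbound (tendsto_const_nhds.div_atTop ?_)
  simpa only [sub_eq_add_neg] using tendsto_atTop_add_const_right _ (-r) hdist

end Laurent

/-- The exterior Cauchy transform `h(z) = −(1/(2πI)) ∮_{C(p,r)} g(w)/(w − z) dw` is
holomorphic outside the closed disk, tends to `0` at infinity, and equals its Laurent
series `Σ_{k≥1} a_k (z − p)^{−k}`, the convergence being uniform on compact subsets of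
`{z : |z − p| > r}`. -/
theorem cauchyOut_laurent_series (p : ℂ) (r : ℝ) (hr : 0 < r) (g : ℂ → ℂ)
    (hg : ContinuousOn g (Metric.sphere p r)) :
    DifferentiableOn ℂ (cauchyOut p r g) {z : ℂ | r < dist z p} ∧
    Filter.Tendsto (cauchyOut p r g) (Bornology.cobounded ℂ) (nhds 0) ∧
    (∀ z : ℂ, r < dist z p →
      HasSum (fun k : ℕ => laurentCoeff p r g k * ((z - p) ^ (k + 1))⁻¹)
        (cauchyOut p r g z)) ∧
    ∀ K : Set ℂ, IsCompact K → K ⊆ {z : ℂ | r < dist z p} →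
      TendstoUniformlyOn
        (fun N z => ∑ k ∈ Finset.range N, laurentCoeff p r g k * ((z - p) ^ (k + 1))⁻¹)
        (cauchyOut p r g) Filter.atTop K :=
  ⟨differentiableOn_cauchyOut hr.le hg, tendsto_cauchyOut_cobounded hr.le hg,
    fun _ hz => hasSum_laurentSeries hr.le hg hz,
    fun _ hK hKp => tendstoUniformlyOn_laurentSeries_of_isCompact hr.le hg hK hKp⟩
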